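/- For every ψ > 0, the inequality ψ² · (sqrt(1 + ψ²) · log((1 + sqrt(1 + ψ²))/ψ) − 1) ≤ 1 holds. -/

import Mathlib

open Matrix

theorem Matrix.isHermitian_transpose_mul_self {m n α : Type*} [Fintype m]
    [CommSemiring α] [StarRing α] [TrivialStar α] (A : Matrix m n α) :
    (Aᵀ * A).IsHermitian := by
  rw [IsHermitian, conjTranspose_eq_transpose_of_trivial, transpose_mul, transpose_transpose]

noncomputable def frobNorm {m n : ℕ} (A : Matrix (Fin m) (Fin n) ℝ) : ℝ :=
  Real.sqrt (∑ i, ∑ j, (A i j) ^ 2)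

noncomputable def specNorm {m n : ℕ} (A : Matrix (Fin m) (Fin n) ℝ) : ℝ :=
  ‖(Matrix.toEuclideanLin A).toContinuousLinearMap‖

/-- The `j`-th largest singular value of `A` (0-indexed). -/
noncomputable def sv {m n : ℕ} (A : Matrix (Fin m) (Fin n) ℝ) (j : Fin n) : ℝ :=
  Real.sqrt
    (((Matrix.isHermitian_transpose_mul_self A).eigenvalues ∘
        Tuple.sort (Matrix.isHermitian_transpose_mul_self A).eigenvalues)
      j.rev)

/-! `(1 + √(1 + ψ²)) / ψ = ψ⁻¹ + √(1 + ψ⁻²)`, so the logarithm is `arsinh ψ⁻¹ ≤ ψ⁻¹`.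
The left-hand side is then at most `ψ √(1 + ψ²) - ψ²`, which is below `1` because
`ψ ≤ √(1 + ψ²)`. -/

namespace Real

theorem arsinh_le_self {x : ℝ} (hx : 0 ≤ x) : arsinh x ≤ x := by
  rw [← sinh_le_sinh, sinh_arsinh]
  exact self_le_sinh_iff.mpr hx

theorem log_one_add_sqrt_one_add_sq_div {x : ℝ} (hx : 0 < x) :
    log ((1 + √(1 + x ^ 2)) / x) = arsinh x⁻¹ := by
  have hsqrt : √(1 + x⁻¹ ^ 2) = √(1 + x ^ 2) / x := by
    rw [show 1 + x⁻¹ ^ 2 = (1 + x ^ 2) / x ^ 2 by field_simp; ring,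
      sqrt_div' _ (sq_nonneg x), sqrt_sq hx.le]
  rw [arsinh, hsqrt, inv_eq_one_div, ← add_div]

theorem mul_sqrt_one_add_sq_le (x : ℝ) : x * √(1 + x ^ 2) ≤ 1 + x ^ 2 := by
  have hle : x ≤ √(1 + x ^ 2) :=
    (le_abs_self x).trans (sqrt_sq_eq_abs x ▸ sqrt_le_sqrt (by linarith))
  calc x * √(1 + x ^ 2) ≤ √(1 + x ^ 2) * √(1 + x ^ 2) :=
        mul_le_mul_of_nonneg_right hle (sqrt_nonneg _)
    _ = 1 + x ^ 2 := mul_self_sqrt (by positivity)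

end Real

theorem stmt18 (ψ : ℝ) (hψ : 0 < ψ) :
    ψ ^ 2 * (Real.sqrt (1 + ψ ^ 2) *
      Real.log ((1 + Real.sqrt (1 + ψ ^ 2)) / ψ) - 1) ≤ 1 := by
  rw [Real.log_one_add_sqrt_one_add_sq_div hψ]
  have harsinh := Real.arsinh_le_self (inv_nonneg.mpr hψ.le)
  calc ψ ^ 2 * (√(1 + ψ ^ 2) * Real.arsinh ψ⁻¹ - 1)
      ≤ ψ ^ 2 * (√(1 + ψ ^ 2) * ψ⁻¹ - 1) := by gcongr
    _ = ψ * √(1 + ψ ^ 2) - ψ ^ 2 := by field_simp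
    _ ≤ 1 := by linarith [Real.mul_sqrt_one_add_sq_le ψ]
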